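/- arXiv:2309.09613 — 3 statements merged into one kernel-verified Lean document; each statement's English description precedes it below -/
import Mathlib

section
/- Let $n$ and $s \ge 2$ be integers and let $1 = q_1 \le q_2 \le \cdots \le q_{s-1} \le q_s = n$ be integers. Then $\prod_{\ell=1}^{s-1} \max\left(1, \frac{1}{\sigma_\ell \tau_\ell}\right) > \frac{n}{4^s}$. -/
/-- `σ_ℓ := ∑_{i=1}^{ℓ} q_i`, viewed as a real number. -/
noncomputable def sigmaQ (q : ℕ → ℕ) (ℓ : ℕ) : ℝ := ∑ i ∈ Finset.Icc 1 ℓ, (q i : ℝ)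

/-- `τ_ℓ := ∑_{i=ℓ+1}^{s} 1/q_i`, viewed as a real number. -/
noncomputable def tauQ (q : ℕ → ℕ) (s ℓ : ℕ) : ℝ := ∑ i ∈ Finset.Icc (ℓ + 1) s, (1 : ℝ) / q i

/-
Let `r_ℓ = σ_{ℓ+1} / σ_ℓ`, so that `∏_{1≤ℓ<s} r_ℓ = σ_s ≥ n`. Fix `L > 1` and call `ℓ` a jump
when `r_ℓ > L`. At a non-jump `r_ℓ ≤ L`. At a jump `q_{ℓ+1} = σ_{ℓ+1} - σ_ℓ ≥ (1 - 1/L) σ_{ℓ+1}`,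
and `σ` is multiplied by at least `L` at every later jump, so `q_i ≥ (1 - 1/L) L^c σ_{ℓ+1}` where
`c` counts the jumps strictly between `ℓ` and `i`. Hence
`(1 - 1/L) σ_{ℓ+1} τ_ℓ ≤ D_ℓ := ∑_{i>ℓ} L^{-c}` and `r_ℓ ≤ L (D_ℓ / (L - 1)) / (σ_ℓ τ_ℓ)`.
For a fixed `i` the exponents `c` attached to the different jumps `ℓ < i` are distinct, so
`∑_ℓ D_ℓ ≤ (s - 1) L / (L - 1)`, and `y ≤ exp (y / e)` turns the product of the `D_ℓ / (L - 1)`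
into the exponential of this sum:
`σ_s ≤ (L exp (L / ((L - 1)² e)))^{s-1} ∏ max(1, 1/(σ_ℓ τ_ℓ))`.
For `L = 5/2` the constant is below `4`.
-/

open Finset Real

section Telescoping

variable {x c : ℕ → ℝ} {a b : ℕ}

theorem prod_mul_le_of_mul_le_succ (hab : a ≤ b) (hc : ∀ ℓ ∈ Ico a b, 0 ≤ c ℓ)
    (h : ∀ ℓ ∈ Ico a b, c ℓ * x ℓ ≤ x (ℓ + 1)) : (∏ ℓ ∈ Ico a b, c ℓ) * x a ≤ x b := by
  induction b, hab using Nat.le_induction with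
  | base => simp
  | succ b hab ih =>
    have hb : b ∈ Ico a (b + 1) := by simp [hab]
    have hsub : Ico a b ⊆ Ico a (b + 1) := Ico_subset_Ico_right b.le_succ
    rw [prod_Ico_succ_top hab, mul_right_comm]
    calc (∏ ℓ ∈ Ico a b, c ℓ) * x a * c b ≤ x b * c b :=
          mul_le_mul_of_nonneg_right (ih (fun ℓ hℓ => hc ℓ (hsub hℓ)) fun ℓ hℓ => h ℓ (hsub hℓ))
            (hc b hb)
      _ ≤ x (b + 1) := by rw [mul_comm]; exact h b hb

theorem le_prod_mul_of_le_mul_succ (hab : a ≤ b) (hc : ∀ ℓ ∈ Ico a b, 0 ≤ c ℓ)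
    (h : ∀ ℓ ∈ Ico a b, x (ℓ + 1) ≤ c ℓ * x ℓ) : x b ≤ (∏ ℓ ∈ Ico a b, c ℓ) * x a := by
  induction b, hab using Nat.le_induction with
  | base => simp
  | succ b hab ih =>
    have hb : b ∈ Ico a (b + 1) := by simp [hab]
    have hsub : Ico a b ⊆ Ico a (b + 1) := Ico_subset_Ico_right b.le_succ
    rw [prod_Ico_succ_top hab, mul_right_comm]
    calc x (b + 1) ≤ c b * x b := h b hb
      _ ≤ c b * ((∏ ℓ ∈ Ico a b, c ℓ) * x a) :=
          mul_le_mul_of_nonneg_left (ih (fun ℓ hℓ => hc ℓ (hsub hℓ)) fun ℓ hℓ => h ℓ (hsub hℓ))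
            (hc b hb)
      _ = _ := mul_comm _ _

end Telescoping

theorem sum_pow_le_inv_one_sub_of_injOn {ι : Type*} {T : Finset ι} {f : ι → ℕ}
    (hf : Set.InjOn f T) {x : ℝ} (hx0 : 0 ≤ x) (hx1 : x < 1) :
    ∑ a ∈ T, x ^ f a ≤ (1 - x)⁻¹ := by
  rw [← sum_image hf, ← tsum_geometric_of_lt_one hx0 hx1]
  exact (summable_geometric_of_lt_one hx0 hx1).sum_le_tsum _ fun n _ => pow_nonneg hx0 n

section JumpCounting

variable {S : Finset ℕ}

theorem strictAntiOn_card_Ico_inter (i : ℕ) :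
    StrictAntiOn (fun ℓ => #(Ico (ℓ + 1) i ∩ S)) ↑(S.filter (· < i)) := by
  intro a _ b hb hab
  simp only [coe_filter, Set.mem_ofPred_eq] at hb
  apply card_lt_card
  rw [ssubset_iff_of_subset (inter_subset_inter_right (Ico_subset_Ico_left (by omega)))]
  exact ⟨b, by simp [hb.1, hb.2, hab], by simp⟩

theorem sum_sum_pow_card_Ico_inter_le (hS : ∀ ℓ ∈ S, 1 ≤ ℓ) (s : ℕ) {x : ℝ} (hx0 : 0 ≤ x)
    (hx1 : x < 1) :
    ∑ ℓ ∈ S, ∑ i ∈ Icc (ℓ + 1) s, x ^ #(Ico (ℓ + 1) i ∩ S) ≤ (s - 1 : ℕ) * (1 - x)⁻¹ := by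
  have hswap : ∀ ℓ i, ℓ ∈ S ∧ i ∈ Icc (ℓ + 1) s ↔ ℓ ∈ S.filter (· < i) ∧ i ∈ Icc 2 s := by
    intro ℓ i
    simp only [mem_Icc, mem_filter]
    constructor
    · rintro ⟨hℓ, h1, h2⟩
      exact ⟨⟨hℓ, by omega⟩, by have := hS ℓ hℓ; omega, h2⟩
    · rintro ⟨⟨hℓ, h1⟩, -, h2⟩
      exact ⟨hℓ, by omega, h2⟩
  rw [sum_comm' hswap]
  calc _ ≤ ∑ i ∈ Icc 2 s, (1 - x)⁻¹ := sum_le_sum fun i _ =>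
        sum_pow_le_inv_one_sub_of_injOn (strictAntiOn_card_Ico_inter i).injOn hx0 hx1
    _ = _ := by
        rw [sum_const, Nat.card_Icc, nsmul_eq_mul]
        congr 2

end JumpCounting

theorem le_exp_div_exp_one (y : ℝ) : y ≤ exp (y / exp 1) := by
  have := exp_one_mul_le_exp (x := y / exp 1)
  rwa [mul_div_cancel₀ _ (exp_pos 1).ne'] at this

section SigmaTau

variable {q : ℕ → ℕ} {s ℓ : ℕ} {L : ℝ}

theorem sigmaQ_monotone (q : ℕ → ℕ) : Monotone (sigmaQ q) := fun _ _ hab =>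
  sum_le_sum_of_subset_of_nonneg (Icc_subset_Icc_right hab) fun _ _ _ => Nat.cast_nonneg _

theorem sigmaQ_succ (q : ℕ → ℕ) (ℓ : ℕ) : sigmaQ q (ℓ + 1) = sigmaQ q ℓ + q (ℓ + 1) :=
  sum_Icc_succ_top (by omega) _

theorem sigmaQ_one (q : ℕ → ℕ) : sigmaQ q 1 = q 1 := by simp [sigmaQ]

theorem one_le_sigmaQ (hq1 : q 1 = 1) (hℓ : 1 ≤ ℓ) : 1 ≤ sigmaQ q ℓ := by
  simpa [sigmaQ_one, hq1] using sigmaQ_monotone q hℓ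

theorem cast_le_sigmaQ (hℓ : 1 ≤ ℓ) : (q ℓ : ℝ) ≤ sigmaQ q ℓ :=
  single_le_sum (f := fun i => (q i : ℝ)) (fun _ _ => Nat.cast_nonneg _) (by simp [hℓ])

theorem tauQ_pos (hq : 0 < q s) (hℓ : ℓ < s) : 0 < tauQ q s ℓ :=
  lt_of_lt_of_le (by positivity)
    (single_le_sum (f := fun i => (1 : ℝ) / q i) (fun _ _ => by positivity)
      (by simp; omega : s ∈ Icc (ℓ + 1) s))

noncomputable def jumpSet (q : ℕ → ℕ) (s : ℕ) (L : ℝ) : Finset ℕ :=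
  (Ico 1 s).filter fun ℓ => L * sigmaQ q ℓ < sigmaQ q (ℓ + 1)

theorem jumpSet_subset : jumpSet q s L ⊆ Ico 1 s := filter_subset _ _

theorem one_sub_inv_mul_sigmaQ_succ_lt (hL : 0 < L) (h : L * sigmaQ q ℓ < sigmaQ q (ℓ + 1)) :
    (1 - L⁻¹) * sigmaQ q (ℓ + 1) < q (ℓ + 1) := by
  have : sigmaQ q ℓ < L⁻¹ * sigmaQ q (ℓ + 1) := by
    rw [inv_mul_eq_div, lt_div_iff₀ hL, mul_comm]; exact h
  linarith [sigmaQ_succ q ℓ]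

theorem pow_card_Ico_inter_jumpSet_mul_le (hL : 0 ≤ L) {a b : ℕ} (hab : a ≤ b) :
    L ^ #(Ico a b ∩ jumpSet q s L) * sigmaQ q a ≤ sigmaQ q b := by
  rw [← prod_const, ← prod_ite_mem]
  refine prod_mul_le_of_mul_le_succ hab (fun ℓ _ => by split_ifs <;> positivity) fun ℓ _ => ?_
  split_ifs with hℓ
  · exact (mem_filter.1 hℓ).2.le
  · rw [one_mul]; exact sigmaQ_monotone q ℓ.le_succ

theorem one_sub_inv_mul_pow_mul_sigmaQ_le
    (hmono : ∀ i j, 1 ≤ i → i ≤ j → j ≤ s → q i ≤ q j) (hL : 1 < L)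
    (hℓ : ℓ ∈ jumpSet q s L) {i : ℕ} (hi : ℓ < i) (his : i ≤ s) :
    (1 - L⁻¹) * (L ^ #(Ico (ℓ + 1) i ∩ jumpSet q s L) * sigmaQ q (ℓ + 1)) ≤ q i := by
  have hL0 : 0 < 1 - L⁻¹ := sub_pos.2 (inv_lt_one_of_one_lt₀ hL)
  induction i, (hi : ℓ + 1 ≤ i) using Nat.le_induction with
  | base => simpa using (one_sub_inv_mul_sigmaQ_succ_lt (by linarith) (mem_filter.1 hℓ).2).le
  | succ i hi ih =>
    have hℓ1 : 1 ≤ ℓ := (mem_Ico.1 (jumpSet_subset hℓ)).1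
    have hi_notMem : i ∉ Ico (ℓ + 1) i ∩ jumpSet q s L := by simp
    rw [← Nat.succ_eq_add_one i, Nat.Ico_succ_right_eq_insert_Ico hi]
    by_cases hiS : i ∈ jumpSet q s L
    · rw [insert_inter_of_mem hiS, card_insert_of_notMem hi_notMem, pow_succ]
      have hL' : 0 ≤ L := by linarith
      calc (1 - L⁻¹) * (L ^ #(Ico (ℓ + 1) i ∩ jumpSet q s L) * L * sigmaQ q (ℓ + 1))
          = (1 - L⁻¹) * (L * (L ^ #(Ico (ℓ + 1) i ∩ jumpSet q s L) * sigmaQ q (ℓ + 1))) := by ring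
        _ ≤ (1 - L⁻¹) * (L * sigmaQ q i) := by
            gcongr; exact pow_card_Ico_inter_jumpSet_mul_le hL' hi
        _ ≤ (1 - L⁻¹) * sigmaQ q (i + 1) := by gcongr; exact (mem_filter.1 hiS).2.le
        _ ≤ q (i + 1) := (one_sub_inv_mul_sigmaQ_succ_lt (by linarith) (mem_filter.1 hiS).2).le
    · rw [insert_inter_of_notMem hiS]
      exact (ih (by omega)).trans (by exact_mod_cast hmono i (i + 1) (by omega) (by omega) his)

theorem one_le_q (hq1 : q 1 = 1) (hmono : ∀ i j, 1 ≤ i → i ≤ j → j ≤ s → q i ≤ q j)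
    {i : ℕ} (hi : 1 ≤ i) (his : i ≤ s) : 1 ≤ q i :=
  hq1 ▸ hmono 1 i le_rfl hi his

noncomputable def jumpWeight (q : ℕ → ℕ) (s : ℕ) (L : ℝ) (ℓ : ℕ) : ℝ :=
  ∑ i ∈ Icc (ℓ + 1) s, L⁻¹ ^ #(Ico (ℓ + 1) i ∩ jumpSet q s L)

theorem one_sub_inv_mul_sigmaQ_succ_mul_tauQ_le (hq1 : q 1 = 1)
    (hmono : ∀ i j, 1 ≤ i → i ≤ j → j ≤ s → q i ≤ q j) (hL : 1 < L) (hℓ : ℓ ∈ jumpSet q s L) :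
    (1 - L⁻¹) * sigmaQ q (ℓ + 1) * tauQ q s ℓ ≤ jumpWeight q s L ℓ := by
  have hℓ1 : 1 ≤ ℓ := (mem_Ico.1 (jumpSet_subset hℓ)).1
  rw [tauQ, mul_sum]
  refine sum_le_sum fun i hi => ?_
  obtain ⟨hℓi, his⟩ := mem_Icc.1 hi
  have hqi : (0 : ℝ) < q i := by exact_mod_cast one_le_q hq1 hmono (by omega) his
  set c := #(Ico (ℓ + 1) i ∩ jumpSet q s L)
  have hLc : 0 < L ^ c := by positivity
  calc (1 - L⁻¹) * sigmaQ q (ℓ + 1) * (1 / q i)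
      = L⁻¹ ^ c * ((1 - L⁻¹) * (L ^ c * sigmaQ q (ℓ + 1))) / q i := by
        rw [inv_pow]; field_simp
    _ ≤ L⁻¹ ^ c * q i / q i := by
        gcongr; exact one_sub_inv_mul_pow_mul_sigmaQ_le hmono hL hℓ (by omega) his
    _ = L⁻¹ ^ c := by field_simp

theorem sigmaQ_succ_le (hq1 : q 1 = 1) (hmono : ∀ i j, 1 ≤ i → i ≤ j → j ≤ s → q i ≤ q j)
    (hL : 1 < L) (hℓ : ℓ ∈ Ico 1 s) :
    sigmaQ q (ℓ + 1) ≤ L * max 1 (1 / (sigmaQ q ℓ * tauQ q s ℓ)) *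
      (if ℓ ∈ jumpSet q s L then exp (jumpWeight q s L ℓ / ((L - 1) * exp 1)) else 1) *
        sigmaQ q ℓ := by
  obtain ⟨hℓ1, hℓs⟩ := mem_Ico.1 hℓ
  have hσ : 0 < sigmaQ q ℓ := by linarith [one_le_sigmaQ hq1 hℓ1]
  have hτ : 0 < tauQ q s ℓ := tauQ_pos (one_le_q hq1 hmono (by omega) le_rfl) hℓs
  split_ifs with hS
  · set D := jumpWeight q s L ℓ
    have hL1 : 0 < L - 1 := by linarith
    have hστ : sigmaQ q (ℓ + 1) * tauQ q s ℓ ≤ L * exp (D / ((L - 1) * exp 1)) :=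
      calc sigmaQ q (ℓ + 1) * tauQ q s ℓ
          = L * ((1 - L⁻¹) * sigmaQ q (ℓ + 1) * tauQ q s ℓ / (L - 1)) := by field_simp
        _ ≤ L * (D / (L - 1)) := by
            gcongr; exact one_sub_inv_mul_sigmaQ_succ_mul_tauQ_le hq1 hmono hL hS
        _ ≤ L * exp (D / ((L - 1) * exp 1)) := by
            rw [← div_div]; gcongr; exact le_exp_div_exp_one _
    calc sigmaQ q (ℓ + 1)
        = sigmaQ q (ℓ + 1) * tauQ q s ℓ * (1 / (sigmaQ q ℓ * tauQ q s ℓ)) * sigmaQ q ℓ := by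
          field_simp
      _ ≤ L * exp (D / ((L - 1) * exp 1)) * max 1 (1 / (sigmaQ q ℓ * tauQ q s ℓ)) *
          sigmaQ q ℓ := by
          gcongr; exact le_max_right _ _
      _ = _ := by ring
  · have hjump : sigmaQ q (ℓ + 1) ≤ L * sigmaQ q ℓ := by
      simpa [jumpSet, hℓ] using hS
    calc sigmaQ q (ℓ + 1) ≤ L * 1 * 1 * sigmaQ q ℓ := by simpa using hjump
      _ ≤ _ := by gcongr; exact le_max_left _ _

theorem sigmaQ_le_pow_mul_prod (hs : 1 ≤ s) (hq1 : q 1 = 1)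
    (hmono : ∀ i j, 1 ≤ i → i ≤ j → j ≤ s → q i ≤ q j) (hL : 1 < L) :
    sigmaQ q s ≤ (L * exp (L / ((L - 1) ^ 2 * exp 1))) ^ (s - 1) *
      ∏ ℓ ∈ Icc 1 (s - 1), max 1 (1 / (sigmaQ q ℓ * tauQ q s ℓ)) := by
  set S := jumpSet q s L
  have hL1 : 0 < L - 1 := by linarith
  have hweights : ∑ ℓ ∈ S, jumpWeight q s L ℓ ≤ (s - 1 : ℕ) * (L / (L - 1)) := by
    have hS : ∀ ℓ ∈ S, 1 ≤ ℓ := fun ℓ hℓ => (mem_Ico.1 (jumpSet_subset hℓ)).1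
    calc ∑ ℓ ∈ S, jumpWeight q s L ℓ ≤ (s - 1 : ℕ) * (1 - L⁻¹)⁻¹ :=
          sum_sum_pow_card_Ico_inter_le hS s (inv_nonneg.2 (by linarith)) (inv_lt_one_of_one_lt₀ hL)
      _ = _ := by congr 1; field_simp
  have hjumps : ∏ ℓ ∈ Ico 1 s,
      (if ℓ ∈ S then exp (jumpWeight q s L ℓ / ((L - 1) * exp 1)) else 1) ≤
        exp (L / ((L - 1) ^ 2 * exp 1)) ^ (s - 1) := by
    rw [prod_ite_mem, inter_eq_right.2 jumpSet_subset, ← exp_sum, ← sum_div, ← exp_nat_mul]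
    gcongr
    calc _ ≤ (s - 1 : ℕ) * (L / (L - 1)) / ((L - 1) * exp 1) := by gcongr
      _ = _ := by field_simp
  have hIcc : Icc 1 (s - 1) = Ico 1 s := by ext; simp; omega
  calc sigmaQ q s ≤ (∏ ℓ ∈ Ico 1 s, L * max 1 (1 / (sigmaQ q ℓ * tauQ q s ℓ)) *
        (if ℓ ∈ S then exp (jumpWeight q s L ℓ / ((L - 1) * exp 1)) else 1)) * sigmaQ q 1 :=
        le_prod_mul_of_le_mul_succ hs (fun ℓ _ => by positivity)
          fun ℓ hℓ => sigmaQ_succ_le hq1 hmono hL hℓ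
    _ = L ^ (s - 1) * (∏ ℓ ∈ Ico 1 s, max 1 (1 / (sigmaQ q ℓ * tauQ q s ℓ))) *
        ∏ ℓ ∈ Ico 1 s, (if ℓ ∈ S then exp (jumpWeight q s L ℓ / ((L - 1) * exp 1)) else 1) := by
        rw [prod_mul_distrib, prod_mul_distrib, prod_const, Nat.card_Ico, sigmaQ_one, hq1,
          Nat.cast_one, mul_one]
    _ ≤ L ^ (s - 1) * (∏ ℓ ∈ Ico 1 s, max 1 (1 / (sigmaQ q ℓ * tauQ q s ℓ))) *
        exp (L / ((L - 1) ^ 2 * exp 1)) ^ (s - 1) := by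
        gcongr
    _ = _ := by rw [hIcc, mul_pow]; ring

end SigmaTau

theorem exp_ten_div_nine_mul_exp_one_le : exp (10 / (9 * exp 1)) ≤ 8 / 5 := by
  have he := exp_one_gt_d9
  have hx : 10 / (9 * exp 1) ≤ 41 / 200 + 41 / 200 := by
    rw [div_le_iff₀ (by positivity)]; nlinarith
  calc exp (10 / (9 * exp 1)) ≤ exp (41 / 200) ^ 2 := by
        rw [sq, ← exp_add]; exact exp_le_exp.2 hx
    _ ≤ (1 / (1 - 41 / 200)) ^ 2 := by
        gcongr; exact exp_bound_div_one_sub_of_interval (by norm_num) (by norm_num)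
    _ ≤ 8 / 5 := by norm_num

theorem stmt_0 (n s : ℕ) (hs : 2 ≤ s) (q : ℕ → ℕ)
    (hq1 : q 1 = 1) (hqs : q s = n)
    (hmono : ∀ i j, 1 ≤ i → i ≤ j → j ≤ s → q i ≤ q j) :
    (n : ℝ) / 4 ^ s <
      ∏ ℓ ∈ Finset.Icc 1 (s - 1), max 1 (1 / (sigmaQ q ℓ * tauQ q s ℓ)) := by
  have hn : (0 : ℝ) < n := by rw [← hqs]; exact_mod_cast one_le_q hq1 hmono (by omega) le_rfl
  have hσ : (n : ℝ) ≤ sigmaQ q s := hqs ▸ cast_le_sigmaQ (by omega)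
  have hconst : (5 / 2 : ℝ) * exp (5 / 2 / ((5 / 2 - 1) ^ 2 * exp 1)) ≤ 4 := by
    have : (5 / 2 : ℝ) / ((5 / 2 - 1) ^ 2 * exp 1) = 10 / (9 * exp 1) := by ring
    linarith [this ▸ exp_ten_div_nine_mul_exp_one_le]
  calc (n : ℝ) / 4 ^ s < n / 4 ^ (s - 1) :=
        div_lt_div_of_pos_left hn (by positivity) (pow_lt_pow_right₀ (by norm_num) (by omega))
    _ ≤ _ := by
        rw [div_le_iff₀' (by positivity)]
        calc (n : ℝ) ≤ sigmaQ q s := hσ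
          _ ≤ _ := sigmaQ_le_pow_mul_prod (L := 5 / 2) (by omega) hq1 hmono (by norm_num)
          _ ≤ _ := by
              gcongr
end

section
/- Let $n, d$ be positive integers with $d \le n$, let $\alpha \ge 1$ be a real number, and set $z = n/d$ (a rational number). Let $Q_1, \ldots, Q_s \subseteq [n]$ be nonempty sets with $q_i := |Q_i|$, and suppose $\sum_{i : q_i \ge z} \frac{1}{q_i} \le \frac{1}{100\alpha z}$. If $I$ is drawn uniformly at random from the $d$-element subsets of $[n]$, then $\Pr\left[\exists\, i \in \{1,\ldots,s\} \text{ with } q_i \ge z \text{ and } I \cap Q_i = \emptyset\right] \le \frac{1}{100}$. -/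
/-!
Union bound over the sets with `q ≥ z`. A uniform `d`-subset of `[n]` misses a fixed `q`-set
with probability `C(n-q, d) / C(n, d) ≤ (1 - d/n)^q ≤ exp (-q d / n) ≤ n / (d q) = z / q`,
so the failure probability is at most `z ∑ 1/q_i ≤ 1/(100 α) ≤ 1/100`.
-/

open Finset

theorem Nat.choose_mul_le_succ_choose_mul {k n : ℕ} (d : ℕ) (hk : k + 1 ≤ n) :
    k.choose d * n ≤ (k + 1).choose d * (n - d) := by
  have hratio : (k + 1 - d) * n ≤ (n - d) * (k + 1) := by
    rcases le_or_gt d (k + 1) with h | h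
    · zify [h, h.trans hk]; nlinarith
    · simp [Nat.sub_eq_zero_of_le h.le]
  refine Nat.le_of_mul_le_mul_right ?_ k.succ_pos
  calc k.choose d * n * (k + 1) = (k + 1).choose d * ((k + 1 - d) * n) := by
        rw [mul_right_comm, Nat.choose_mul_succ_eq]; ring
    _ ≤ (k + 1).choose d * ((n - d) * (k + 1)) := by gcongr
    _ = (k + 1).choose d * (n - d) * (k + 1) := by ring

theorem Nat.choose_sub_mul_pow_le {n q : ℕ} (d : ℕ) (hq : q ≤ n) :
    (n - q).choose d * n ^ q ≤ n.choose d * (n - d) ^ q := by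
  induction q with
  | zero => simp
  | succ q ih =>
    have hstep := Nat.choose_mul_le_succ_choose_mul d (k := n - (q + 1)) (n := n) (by omega)
    rw [show n - (q + 1) + 1 = n - q by omega] at hstep
    calc (n - (q + 1)).choose d * n ^ (q + 1) = (n - (q + 1)).choose d * n * n ^ q := by ring
      _ ≤ (n - q).choose d * (n - d) * n ^ q := Nat.mul_le_mul_right _ hstep
      _ = (n - q).choose d * n ^ q * (n - d) := by ring
      _ ≤ n.choose d * (n - d) ^ q * (n - d) := Nat.mul_le_mul_right _ (ih (by omega))
      _ = n.choose d * (n - d) ^ (q + 1) := by ring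

theorem Real.one_sub_pow_le_inv_mul {x : ℝ} (q : ℕ) (hx : x ≤ 1) (hqx : 0 < q * x) :
    (1 - x) ^ q ≤ (q * x)⁻¹ :=
  calc (1 - x) ^ q ≤ Real.exp (-x) ^ q :=
        pow_le_pow_left₀ (by linarith) (Real.one_sub_le_exp_neg x) q
    _ = (Real.exp (q * x))⁻¹ := by rw [← Real.exp_nat_mul, ← Real.exp_neg, mul_neg]
    _ ≤ (q * x)⁻¹ := by
        gcongr
        linarith [Real.add_one_le_exp (q * x)]

theorem Nat.cast_choose_sub_le_mul_div {n q : ℕ} (d : ℕ) (hd : 0 < d) (hq : 0 < q)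
    (hqn : q ≤ n) :
    ((n - q).choose d : ℝ) ≤ n.choose d * ((n / d : ℝ) / q) := by
  rcases lt_or_ge n d with hnd | hdn
  · simp [Nat.choose_eq_zero_of_lt hnd, Nat.choose_eq_zero_of_lt (show n - q < d by omega)]
  have hn : (0 : ℝ) < n := by exact_mod_cast hd.trans_le hdn
  set x : ℝ := d / n
  have hx : x ≤ 1 := div_le_one_of_le₀ (by exact_mod_cast hdn) hn.le
  have hqx : 0 < (q : ℝ) * x := by positivity
  have hmain : ((n - q).choose d : ℝ) * n ^ q ≤ n.choose d * (1 - x) ^ q * n ^ q := by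
    have hsub : (n : ℝ) - d = (1 - x) * n := by simp only [x]; field_simp
    calc ((n - q).choose d : ℝ) * n ^ q ≤ n.choose d * ((n : ℝ) - d) ^ q := by
          exact_mod_cast Nat.choose_sub_mul_pow_le d hqn
      _ = n.choose d * (1 - x) ^ q * n ^ q := by rw [hsub, mul_pow, mul_assoc]
  calc ((n - q).choose d : ℝ) ≤ n.choose d * (1 - x) ^ q :=
        le_of_mul_le_mul_right hmain (by positivity)
    _ ≤ n.choose d * (q * x)⁻¹ := by gcongr; exact Real.one_sub_pow_le_inv_mul q hx hqx
    _ = n.choose d * ((n / d : ℝ) / q) := by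
        simp only [x]; field_simp

theorem Finset.card_powersetCard_filter_inter_eq_empty {α : Type*} [Fintype α] [DecidableEq α]
    (Q : Finset α) (d : ℕ) :
    #{I ∈ (univ : Finset α).powersetCard d | I ∩ Q = ∅} = (Fintype.card α - #Q).choose d := by
  have : {I ∈ (univ : Finset α).powersetCard d | I ∩ Q = ∅} = Qᶜ.powersetCard d := by
    ext I
    simp [← disjoint_iff_inter_eq_empty, subset_compl_iff_disjoint_right, and_comm]
  rw [this, card_powersetCard, card_compl]

theorem Finset.card_filter_exists_le_sum_filter {ι β : Type*}
    (S : Finset β) (T : Finset ι) (p : ι → Prop) [DecidablePred p] (P : ι → β → Prop)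
    [∀ i, DecidablePred (P i)] [DecidablePred fun x => ∃ i ∈ T, p i ∧ P i x] :
    #{x ∈ S | ∃ i ∈ T, p i ∧ P i x} ≤ ∑ i ∈ T with p i, #{x ∈ S | P i x} := by
  classical
  refine (card_le_card fun x hx => ?_).trans card_biUnion_le
  obtain ⟨hxS, i, hiT, hpi, hPi⟩ := mem_filter.1 hx
  exact mem_biUnion.2 ⟨i, mem_filter.2 ⟨hiT, hpi⟩, mem_filter.2 ⟨hxS, hPi⟩⟩

open scoped Classical in
theorem stmt_14_general (n d : ℕ) (hn : 0 < n) (hd : 0 < d)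
    (α : ℝ) (hα : 1 ≤ α) (s : ℕ) (Q : ℕ → Finset (Fin n))
    (hsum : ∑ i ∈ (Finset.Icc 1 s).filter
        (fun i => (n : ℝ) / d ≤ ((Q i).card : ℝ)), (1 : ℝ) / (Q i).card
      ≤ 1 / (100 * α * ((n : ℝ) / d))) :
    ((((Finset.univ : Finset (Fin n)).powersetCard d).filter
        (fun I => ∃ i ∈ Finset.Icc 1 s,
          (n : ℝ) / d ≤ ((Q i).card : ℝ) ∧ I ∩ Q i = ∅)).card : ℝ)
      / (((Finset.univ : Finset (Fin n)).powersetCard d).card : ℝ)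
      ≤ 1 / 100 := by
  set z : ℝ := n / d
  have hz : 0 < z := by positivity
  refine div_le_of_le_mul₀ (Nat.cast_nonneg _) (by norm_num) ?_
  rw [card_powersetCard, card_univ, Fintype.card_fin]
  calc _ ≤ ∑ i ∈ Icc 1 s with z ≤ #(Q i),
          (#{I ∈ (univ : Finset (Fin n)).powersetCard d | I ∩ Q i = ∅} : ℝ) :=
        -- `convert` reconciles the classical decidability instance of the statement
        mod_cast (by convert card_filter_exists_le_sum_filter _ _ _ _)
    _ ≤ ∑ i ∈ Icc 1 s with z ≤ #(Q i), n.choose d * (z / #(Q i)) := by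
        refine sum_le_sum fun i hi => ?_
        have hq : (0 : ℝ) < #(Q i) := hz.trans_le (mem_filter.1 hi).2
        rw [card_powersetCard_filter_inter_eq_empty, Fintype.card_fin]
        exact Nat.cast_choose_sub_le_mul_div d hd (by exact_mod_cast hq)
          (by simpa using card_le_univ (Q i))
    _ = n.choose d * z * ∑ i ∈ Icc 1 s with z ≤ #(Q i), (1 : ℝ) / #(Q i) := by
        rw [mul_sum]; simp only [mul_one_div, mul_div_assoc]
    _ ≤ n.choose d * z * (1 / (100 * α * z)) := by gcongr
    _ = 1 / α * (1 / 100 * n.choose d) := by field_simp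
    _ ≤ 1 / 100 * n.choose d := by
        apply mul_le_of_le_one_left (by positivity)
        rw [div_le_one (by linarith)]; exact hα

open scoped Classical in
theorem stmt_14 (n d : ℕ) (hn : 0 < n) (hd : 0 < d) (hdn : d ≤ n)
    (α : ℝ) (hα : 1 ≤ α) (s : ℕ) (Q : ℕ → Finset (Fin n))
    (hQ : ∀ i ∈ Finset.Icc 1 s, (Q i).Nonempty)
    (hsum : ∑ i ∈ (Finset.Icc 1 s).filter
        (fun i => (n : ℝ) / d ≤ ((Q i).card : ℝ)), (1 : ℝ) / (Q i).card
      ≤ 1 / (100 * α * ((n : ℝ) / d))) :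
    ((((Finset.univ : Finset (Fin n)).powersetCard d).filter
        (fun I => ∃ i ∈ Finset.Icc 1 s,
          (n : ℝ) / d ≤ ((Q i).card : ℝ) ∧ I ∩ Q i = ∅)).card : ℝ)
      / (((Finset.univ : Finset (Fin n)).powersetCard d).card : ℝ)
      ≤ 1 / 100 :=
  stmt_14_general n d hn hd α hα s Q hsum
end

section
/- Let $n = 2^N$ and $\alpha = 2^a$ with integers $a \ge 1$ and $N \ge 1$, and let $s$ be a positive integer with $s + 2 \le \frac{\log_2 n}{2000 \log_2 \alpha}$. Let $Q_1, \ldots, Q_s \subseteq [n]$ be arbitrary fixed tests, and let $g : \{0,1\}^s \times \{0,1\}^s \to \{0,1\}$ be an arbitrary function. Draw $(\xi, I_0, I_1)$ as follows: $d = 2^{\boldsymbol{k}}$ where $\boldsymbol{k}$ is uniform over $\{a, a+1, \ldots, N - a - 1\}$; $\xi$ is uniform over $\{0,1\}$; $I_{1-\xi}$ is uniform over the $d$-element subsets of $[n]$; and given $I_{1-\xi}$, the set $I_\xi$ is uniform over the $\alpha d$-element subsets of $[n]$ containing $I_{1-\xi}$ (so $I_\xi \supset I_{1-\xi}$ and $|I_\xi|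 = \alpha|I_{1-\xi}|$). Then $\Pr\left[g\big(o(I_0), o(I_1)\big) = \xi\right] \le \frac{103}{200}$, where $o(I) := \big(\mathbb{1}[I \cap Q_1 \ne \emptyset], \ldots, \mathbb{1}[I \cap Q_s \ne \emptyset]\big) \in \{0,1\}^s$ is the vector of test outcomes on defective set $I$. In particular, no deterministic non-adaptive algorithm making $s$ tests can identify the larger of the two defective sets with success probability at least $3/4$ under this input distribution. -/
/-- The family of nested pairs `(J, K)` with `J ⊆ K`, `|J| = d` and `|K| = D`,
over the ground set `Fin n`. -/
def nestedPairs (n d D : ℕ) : Finset (Finset (Fin n) × Finset (Fin n)) :=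
  (((Finset.univ : Finset (Fin n)).powersetCard d) ×ˢ
    ((Finset.univ : Finset (Fin n)).powersetCard D)).filter (fun p => p.1 ⊆ p.2)

/-- The vector of test outcomes `o(I) = (𝟙[I ∩ Q₁ ≠ ∅], …, 𝟙[I ∩ Q_s ≠ ∅])`
for the defective set `I`. -/
def outcomes {n s : ℕ} (Q : Fin s → Finset (Fin n)) (I : Finset (Fin n)) : Fin s → Bool :=
  fun i => decide (I ∩ Q i).Nonempty

/-!
At a fixed scale `d`, a guess `g` can beat a coin flip only on the pairs `J ⊆ K` with
`o(J) ≠ o(K)`, since on the others it sees the same input in both orders. Such a pair has a test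
`Qᵢ` missed by `J` but hit by `K`, which happens with probability `mᵢ(d) - mᵢ(αd)`, where `mᵢ(d)`
is the probability that a random `d`-set misses `Qᵢ`. As `αd = 2^(a+k)` for `d = 2^k`, these
differences telescope when summed over `k`, so the total advantage over the `N - 2a` scales is at
most `s a / 2`, which is tiny against `N - 2a ≥ 2000 s a`.
-/

open Finset

section Outcomes

variable {n s : ℕ} (Q : Fin s → Finset (Fin n))

lemma outcomes_eq_false_iff (I : Finset (Fin n)) (i : Fin s) :
    outcomes Q I i = false ↔ I ⊆ (Q i)ᶜ := by
  simp [outcomes, ← disjoint_iff_inter_eq_empty, subset_compl_iff_disjoint_right]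

lemma outcomes_eq_false_of_subset {I J : Finset (Fin n)} (hIJ : I ⊆ J) {i : Fin s}
    (hJ : outcomes Q J i = false) : outcomes Q I i = false :=
  (outcomes_eq_false_iff Q I i).2 (hIJ.trans ((outcomes_eq_false_iff Q J i).1 hJ))

end Outcomes

section NestedPairs

variable {n d D : ℕ}

lemma mem_nestedPairs {p : Finset (Fin n) × Finset (Fin n)} :
    p ∈ nestedPairs n d D ↔ #p.1 = d ∧ #p.2 = D ∧ p.1 ⊆ p.2 := by
  simp [nestedPairs, and_assoc]

lemma card_filter_nestedPairs_fst_eq {J : Finset (Fin n)} (hJ : #J = d) (hdD : d ≤ D) :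
    #{p ∈ nestedPairs n d D | p.1 = J} = (n - d).choose (D - d) := by
  have : {p ∈ nestedPairs n d D | p.1 = J} =
      {K ∈ (univ : Finset (Fin n)).powersetCard D | J ⊆ K}.map
        (Function.Embedding.sectR J _) := by
    ext ⟨J', K⟩
    simp only [mem_filter, mem_nestedPairs, mem_map, mem_powersetCard_univ,
      Function.Embedding.sectR_apply, Prod.mk.injEq]
    aesop
  rw [this, card_map, card_filter_powersetCard_subset _ _ _ (subset_univ J) (hJ ▸ hdD),
    card_univ, Fintype.card_fin, hJ]

lemma card_filter_nestedPairs_snd_eq {K : Finset (Fin n)} (hK : #K = D) :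
    #{p ∈ nestedPairs n d D | p.2 = K} = D.choose d := by
  have : {p ∈ nestedPairs n d D | p.2 = K} =
      (K.powersetCard d).map (Function.Embedding.sectL _ K) := by
    ext ⟨J, K'⟩
    simp only [mem_filter, mem_nestedPairs, mem_map, mem_powersetCard,
      Function.Embedding.sectL_apply, Prod.mk.injEq]
    aesop
  rw [this, card_map, card_powersetCard, hK]

end NestedPairs

section Counting

variable {α β : Type*} [DecidableEq β]

lemma card_filter_subset_eq_choose_mul (P : Finset α) (f : α → Finset β) {d m : ℕ}
    (hf : ∀ p ∈ P, #(f p) = d) (hfib : ∀ J : Finset β, #J = d → #{p ∈ P | f p = J} = m)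
    (S : Finset β) : #{p ∈ P | f p ⊆ S} = (#S).choose d * m := by
  rw [card_eq_sum_card_fiberwise (f := f) (t := S.powersetCard d) ?maps,
    sum_const_nat ?fibers, card_powersetCard]
  case maps =>
    intro p hp
    rw [mem_coe, mem_filter] at hp
    exact mem_coe.2 (mem_powersetCard.2 ⟨hp.2, hf p hp.1⟩)
  case fibers =>
    intro J hJ
    rw [mem_powersetCard] at hJ
    rw [filter_filter, ← hfib J hJ.2]
    congr 1
    exact filter_congr fun p _ => ⟨And.right, fun h => ⟨h ▸ hJ.1, h⟩⟩

lemma card_filter_subset_div_card [Fintype β] (P : Finset α) (f : α → Finset β) {d m : ℕ}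
    (hf : ∀ p ∈ P, #(f p) = d) (hfib : ∀ J : Finset β, #J = d → #{p ∈ P | f p = J} = m)
    (hm : m ≠ 0) (S : Finset β) :
    (#{p ∈ P | f p ⊆ S} : ℝ) / #P = ((#S).choose d : ℝ) / (Fintype.card β).choose d := by
  have hP := card_filter_subset_eq_choose_mul P f hf hfib univ
  rw [filter_true_of_mem fun p _ => subset_univ (f p), card_univ] at hP
  rw [card_filter_subset_eq_choose_mul P f hf hfib S, hP]
  push_cast
  exact mul_div_mul_right _ _ (Nat.cast_ne_zero.2 hm)

end Counting

lemma card_nestedPairs {n d D : ℕ} : #(nestedPairs n d D) = n.choose D * D.choose d := by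
  have h := card_filter_subset_eq_choose_mul (nestedPairs n d D) Prod.snd
    (fun p hp => (mem_nestedPairs.1 hp).2.1) (fun _ => card_filter_nestedPairs_snd_eq) univ
  rwa [filter_true_of_mem fun p _ => subset_univ p.2, card_univ, Fintype.card_fin] at h

/-- The probability that a uniformly random `d`-subset of an `n`-set avoids a fixed `q`-subset. -/
noncomputable def missProb (n d q : ℕ) : ℝ := ((n - q).choose d : ℝ) / n.choose d

lemma missProb_nonneg (n d q : ℕ) : 0 ≤ missProb n d q := by
  unfold missProb; positivity

lemma missProb_le_one (n d q : ℕ) : missProb n d q ≤ 1 :=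
  div_le_one_of_le₀ (Nat.cast_le.2 (Nat.choose_le_choose d (Nat.sub_le n q))) (Nat.cast_nonneg _)

section MissProb

variable {n s d D : ℕ} (Q : Fin s → Finset (Fin n))

lemma card_filter_outcomes_fst_div (hdD : d ≤ D) (hDn : D ≤ n) (i : Fin s) :
    (#{p ∈ nestedPairs n d D | outcomes Q p.1 i = false} : ℝ) / #(nestedPairs n d D)
      = missProb n d #(Q i) := by
  simp_rw [outcomes_eq_false_iff]
  rw [card_filter_subset_div_card _ Prod.fst (fun p hp => (mem_nestedPairs.1 hp).1)
    (fun _ hJ => card_filter_nestedPairs_fst_eq hJ hdD) (Nat.choose_pos (by omega)).ne',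
    card_compl, Fintype.card_fin, missProb]

lemma card_filter_outcomes_snd_div (hdD : d ≤ D) (i : Fin s) :
    (#{p ∈ nestedPairs n d D | outcomes Q p.2 i = false} : ℝ) / #(nestedPairs n d D)
      = missProb n D #(Q i) := by
  simp_rw [outcomes_eq_false_iff]
  rw [card_filter_subset_div_card _ Prod.snd (fun p hp => (mem_nestedPairs.1 hp).2.1)
    (fun _ hK => card_filter_nestedPairs_snd_eq hK) (Nat.choose_pos hdD).ne',
    card_compl, Fintype.card_fin, missProb]

end MissProb

lemma card_filter_add_card_filter_swap_le {α γ : Type*} [DecidableEq γ] (P : Finset α)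
    (u v : α → γ) (g : γ → γ → Bool) :
    #{p ∈ P | g (u p) (v p) = true} + #{p ∈ P | g (v p) (u p) = false}
      ≤ #P + #{p ∈ P | u p ≠ v p} := by
  classical
  rw [← card_union_add_card_inter]
  refine add_le_add (card_le_card (union_subset (filter_subset _ _) (filter_subset _ _)))
    (card_le_card fun p hp => ?_)
  simp only [mem_inter, mem_filter] at hp ⊢
  refine ⟨hp.1.1, fun huv => ?_⟩
  rw [huv] at hp
  exact Bool.false_ne_true (hp.2.2.symm.trans hp.1.2)

lemma card_filter_outcomes_ne_add_le {n s : ℕ} (Q : Fin s → Finset (Fin n))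
    (P : Finset (Finset (Fin n) × Finset (Fin n))) (hP : ∀ p ∈ P, p.1 ⊆ p.2) :
    #{p ∈ P | outcomes Q p.1 ≠ outcomes Q p.2} + ∑ i, #{p ∈ P | outcomes Q p.2 i = false}
      ≤ ∑ i, #{p ∈ P | outcomes Q p.1 i = false} := by
  have hsplit : ∀ i, #{p ∈ P | outcomes Q p.1 i = false ∧ outcomes Q p.2 i = true}
      + #{p ∈ P | outcomes Q p.2 i = false} = #{p ∈ P | outcomes Q p.1 i = false} := by
    intro i
    rw [← card_filter_add_card_filter_not (s := {p ∈ P | outcomes Q p.1 i = false})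
      (fun p => outcomes Q p.2 i = true),
      filter_filter, filter_filter]
    congr 2
    refine filter_congr fun p hp => ?_
    simp only [Bool.not_eq_true]
    exact ⟨fun h => ⟨outcomes_eq_false_of_subset Q (hP p hp) h, h⟩, And.right⟩
  have hcover : #{p ∈ P | outcomes Q p.1 ≠ outcomes Q p.2}
      ≤ ∑ i, #{p ∈ P | outcomes Q p.1 i = false ∧ outcomes Q p.2 i = true} := by
    refine le_trans (card_le_card ?_) card_biUnion_le
    intro p hp
    obtain ⟨hpP, hne⟩ := mem_filter.1 hp
    obtain ⟨i, hi⟩ := Function.ne_iff.1 hne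
    have hi' : outcomes Q p.2 i = true := by
      by_contra h
      rw [Bool.not_eq_true] at h
      exact hi ((outcomes_eq_false_of_subset Q (hP p hpP) h).trans h.symm)
    simp only [mem_biUnion, mem_univ, mem_filter, true_and]
    exact ⟨i, hpP, by simpa [hi'] using hi, hi'⟩
  calc _ ≤ ∑ i, #{p ∈ P | outcomes Q p.1 i = false ∧ outcomes Q p.2 i = true}
        + ∑ i, #{p ∈ P | outcomes Q p.2 i = false} := by gcongr
    _ = _ := by rw [← sum_add_distrib]; exact sum_congr rfl fun i _ => hsplit i

/-- The success probability of the guess `g` at scale `(d, D)`: `ξ` is a fair coin and `(J, K)`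
a uniformly random nested pair, with `I_ξ = K` and `I_{1-ξ} = J`. -/
noncomputable def guessProb {n s : ℕ} (Q : Fin s → Finset (Fin n))
    (g : (Fin s → Bool) → (Fin s → Bool) → Bool) (d D : ℕ) : ℝ :=
  (1 / 2 : ℝ) * ∑ ξ : Bool,
    (#{p ∈ nestedPairs n d D |
        g (outcomes Q (cond ξ p.1 p.2)) (outcomes Q (cond ξ p.2 p.1)) = ξ} : ℝ)
      / #(nestedPairs n d D)

lemma guessProb_le {n s d D : ℕ} (hdD : d ≤ D) (hDn : D ≤ n) (Q : Fin s → Finset (Fin n))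
    (g : (Fin s → Bool) → (Fin s → Bool) → Bool) :
    guessProb Q g d D ≤ 1 / 2 + 1 / 2 * ∑ i, (missProb n d #(Q i) - missProb n D #(Q i)) := by
  set P := nestedPairs n d D
  have hP : (0 : ℝ) < #P := by
    rw [card_nestedPairs]
    exact_mod_cast Nat.mul_pos (Nat.choose_pos hDn) (Nat.choose_pos hdD)
  have hcount : (#{p ∈ P | g (outcomes Q p.1) (outcomes Q p.2) = true} : ℝ)
        + #{p ∈ P | g (outcomes Q p.2) (outcomes Q p.1) = false}
      ≤ #P + ∑ i, ((#{p ∈ P | outcomes Q p.1 i = false} : ℝ)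
        - #{p ∈ P | outcomes Q p.2 i = false}) := by
    have h₁ := card_filter_add_card_filter_swap_le P (outcomes Q ·.1) (outcomes Q ·.2) g
    have h₂ := card_filter_outcomes_ne_add_le Q P fun p hp => (mem_nestedPairs.1 hp).2.2
    have h : (#{p ∈ P | g (outcomes Q p.1) (outcomes Q p.2) = true}
        + #{p ∈ P | g (outcomes Q p.2) (outcomes Q p.1) = false}
        + ∑ i, #{p ∈ P | outcomes Q p.2 i = false} : ℝ)
        ≤ #P + ∑ i, #{p ∈ P | outcomes Q p.1 i = false} := by
      exact_mod_cast (by omega : _ ≤ _)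
    push_cast at h
    rw [sum_sub_distrib]
    linarith
  calc guessProb Q g d D
      = 1 / 2 * ((#{p ∈ P | g (outcomes Q p.1) (outcomes Q p.2) = true} : ℝ)
        + #{p ∈ P | g (outcomes Q p.2) (outcomes Q p.1) = false}) / #P := by
        simp only [guessProb, Fintype.sum_bool, cond_true, cond_false]
        rw [← add_div, mul_div_assoc]
    _ ≤ 1 / 2 * (#P + ∑ i, ((#{p ∈ P | outcomes Q p.1 i = false} : ℝ)
        - #{p ∈ P | outcomes Q p.2 i = false})) / #P := by gcongr
    _ = _ := by
        rw [mul_div_assoc, add_div, div_self hP.ne', sum_div]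
        simp only [sub_div, card_filter_outcomes_fst_div Q hdD hDn,
          card_filter_outcomes_snd_div Q hdD, P]
        ring

lemma sum_Ico_sub_shift_le {f : ℕ → ℝ} (hf₀ : ∀ k, 0 ≤ f k) (hf₁ : ∀ k, f k ≤ 1) (a b : ℕ) :
    ∑ k ∈ Ico a b, (f k - f (a + k)) ≤ a := by
  rcases le_total b a with hba | hab
  · simp [Ico_eq_empty_of_le hba]
  have hshift : ∑ k ∈ Ico a b, f (a + k) = ∑ k ∈ Ico (2 * a) (b + a), f k := by
    rw [sum_Ico_add, two_mul]
  have hhead : ∑ k ∈ Ico a (2 * a), f k ≤ a := by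
    calc _ ≤ ∑ _k ∈ Ico a (2 * a), (1 : ℝ) := sum_le_sum fun k _ => hf₁ k
      _ = a := by simp [two_mul]
  calc ∑ k ∈ Ico a b, (f k - f (a + k))
      ≤ ∑ k ∈ Ico a (b + a), f k - ∑ k ∈ Ico (2 * a) (b + a), f k := by
        rw [sum_sub_distrib, hshift]
        exact sub_le_sub_right (sum_le_sum_of_subset_of_nonneg
          (Ico_subset_Ico_right (by omega)) fun k _ _ => hf₀ k) _
    _ = ∑ k ∈ Ico a (2 * a), f k := by
        rw [← sum_Ico_consecutive f (by omega : a ≤ 2 * a) (by omega : 2 * a ≤ b + a)]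
        ring
    _ ≤ a := hhead

lemma sum_guessProb_le (N a : ℕ) {s : ℕ} (Q : Fin s → Finset (Fin (2 ^ N)))
    (g : (Fin s → Bool) → (Fin s → Bool) → Bool) :
    ∑ k ∈ Icc a (N - a - 1), guessProb Q g (2 ^ k) (2 ^ (a + k))
      ≤ #(Icc a (N - a - 1)) / 2 + s * a / 2 := by
  calc _ ≤ ∑ k ∈ Icc a (N - a - 1), (1 / 2 + 1 / 2 * ∑ i,
        (missProb (2 ^ N) (2 ^ k) #(Q i) - missProb (2 ^ N) (2 ^ (a + k)) #(Q i))) := by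
        refine sum_le_sum fun k hk => guessProb_le ?_ ?_ Q g <;>
          exact Nat.pow_le_pow_right two_pos (by simp only [mem_Icc] at hk; omega)
    _ = #(Icc a (N - a - 1)) / 2 + 1 / 2 * ∑ i, ∑ k ∈ Ico a (N - a - 1 + 1),
        (missProb (2 ^ N) (2 ^ k) #(Q i) - missProb (2 ^ N) (2 ^ (a + k)) #(Q i)) := by
        rw [sum_add_distrib, ← mul_sum, sum_comm, Ico_add_one_right_eq_Icc]
        simp only [sum_const, nsmul_eq_mul]
        ring
    _ ≤ #(Icc a (N - a - 1)) / 2 + 1 / 2 * ∑ _i : Fin s, (a : ℝ) := by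
        gcongr
        exact sum_Ico_sub_shift_le (fun _ => missProb_nonneg _ _ _)
          (fun _ => missProb_le_one _ _ _) a _
    _ = _ := by simp only [sum_const, card_univ, Fintype.card_fin, nsmul_eq_mul]; ring

theorem stmt_16_general (N a : ℕ) (ha : 1 ≤ a) (s : ℕ)
    (hslog : (s : ℝ) + 2 ≤
      Real.logb 2 ((2 : ℝ) ^ N) / (2000 * Real.logb 2 ((2 : ℝ) ^ a)))
    (Q : Fin s → Finset (Fin (2 ^ N)))
    (g : (Fin s → Bool) → (Fin s → Bool) → Bool) :
    (1 / ((Finset.Icc a (N - a - 1)).card : ℝ)) *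
      ∑ k ∈ Finset.Icc a (N - a - 1), (1 / 2 : ℝ) *
        ∑ ξ : Bool,
          (((nestedPairs (2 ^ N) (2 ^ k) (2 ^ (a + k))).filter (fun p =>
              g (outcomes Q (cond ξ p.1 p.2)) (outcomes Q (cond ξ p.2 p.1)) = ξ)).card : ℝ)
            / ((nestedPairs (2 ^ N) (2 ^ k) (2 ^ (a + k))).card : ℝ)
      ≤ 103 / 200 := by
  have hN : 2000 * ((s : ℝ) * a) + 4000 * a ≤ N := by
    rw [Real.logb_pow, Real.logb_pow, Real.logb_self_eq_one one_lt_two, mul_one, mul_one,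
      le_div_iff₀ (by positivity)] at hslog
    linarith
  have hM : (0 : ℝ) < N - 2 * a := by
    have : (1 : ℝ) ≤ a := by exact_mod_cast ha
    nlinarith
  have h2a : 2 * a < N := by exact_mod_cast (by linarith : (2 * a : ℝ) < N)
  have hcard : #(Icc a (N - a - 1)) = N - 2 * a := by
    rw [Nat.card_Icc]; omega
  change 1 / _ * ∑ k ∈ _, guessProb Q g (2 ^ k) (2 ^ (a + k)) ≤ _
  calc _ ≤ 1 / ((N : ℝ) - 2 * a) * (((N : ℝ) - 2 * a) / 2 + s * a / 2) := by
        have h := sum_guessProb_le N a Q g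
        rw [hcard, Nat.cast_sub h2a.le] at h ⊢
        push_cast at h ⊢
        gcongr
    _ ≤ 103 / 200 := by
        rw [one_div_mul_eq_div, div_le_iff₀ hM]
        linarith

theorem stmt_16 (N a : ℕ) (ha : 1 ≤ a) (hN : 1 ≤ N) (s : ℕ) (hs : 0 < s)
    (hslog : (s : ℝ) + 2 ≤
      Real.logb 2 ((2 : ℝ) ^ N) / (2000 * Real.logb 2 ((2 : ℝ) ^ a)))
    (Q : Fin s → Finset (Fin (2 ^ N)))
    (g : (Fin s → Bool) → (Fin s → Bool) → Bool) :
    (1 / ((Finset.Icc a (N - a - 1)).card : ℝ)) *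
      ∑ k ∈ Finset.Icc a (N - a - 1), (1 / 2 : ℝ) *
        ∑ ξ : Bool,
          (((nestedPairs (2 ^ N) (2 ^ k) (2 ^ (a + k))).filter (fun p =>
              g (outcomes Q (cond ξ p.1 p.2)) (outcomes Q (cond ξ p.2 p.1)) = ξ)).card : ℝ)
            / ((nestedPairs (2 ^ N) (2 ^ k) (2 ^ (a + k))).card : ℝ)
      ≤ 103 / 200 :=
  stmt_16_general N a ha s hslog Q g
end
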